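/- Let (x, y, z) : [0, 2π] → ℝ³ be smooth, let γ : [0, 2π] × ℝ → ℝ² be continuously differentiable and 2π-periodic in the second variable with (1/2π)·∫₀^{2π} γ(t, s) ds = (x'(t), z'(t)) for all t ∈ [0, 2π], and let n ≥ 1 be a natural number. Define (a(t), c(t)) := (x(0), z(0)) + ∫₀^{t} γ(u, n·u) du. Then for all t ∈ [0, 2π]: |(a(t), c(t)) − (x(t), z(t))| ≤ (4π/n)·( π·sup |∂ₜγ| + sup |γ| ), where the suprema are over [0, 2π] × ℝ. -/

import Mathlib

/-!
Identify `ℝ²` with `ℂ` and write `Γ(u, s) = γ₁(u, s) + γ₂(u, s) i`, `L = 2π/n`. Cut `[0, t]`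
into blocks of length `L`, one period of the fast variable `s = n u`. On the block `[a, a + L]`,
freezing the slow variable at `a` costs at most `M₁ L²/2`, after which `u ↦ Γ(a, n u)`
integrates exactly to `L` times its mean `x'(a) + z'(a) i`; that mean is `M₁`-Lipschitz in `a`,
so comparing it with `x'(u) + z'(u) i` costs another `M₁ L²/2`. The at most `n` complete blocks
contribute `n M₁ L²`, the incomplete last one at most `2 M₂ L`, and the primitive of
`x' + z' i` is `x + z i` up to its value at `0`.
-/

open scoped Interval
open Real Set Function intervalIntegral MeasureTheory

section Averaging

variable {E : Type*} [NormedAddCommGroup E] [NormedSpace ℝ E]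

theorem norm_integral_le_of_norm_le_mul_sub {f : ℝ → E} {a b M : ℝ} (hab : a ≤ b)
    (hf : IntervalIntegrable f volume a b) (h : ∀ u ∈ Icc a b, ‖f u‖ ≤ M * (u - a)) :
    ‖∫ u in a..b, f u‖ ≤ M * (b - a) ^ 2 / 2 :=
  calc ‖∫ u in a..b, f u‖ ≤ ∫ u in a..b, ‖f u‖ := norm_integral_le_integral_norm hab
    _ ≤ ∫ u in a..b, M * (u - a) := integral_mono_on hab hf.norm
      ((by fun_prop : Continuous fun u => M * (u - a)).intervalIntegrable a b) h
    _ = M * (b - a) ^ 2 / 2 := by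
      rw [intervalIntegral.integral_const_mul, integral_comp_sub_right (fun u => u), integral_id]
      ring

theorem norm_integral_le_of_blocks {g : ℝ → E} (hg : Continuous g) {L t c C D : ℝ}
    (hL : 0 < L) (ht : 0 ≤ t) (htc : t ≤ c * L) (hC : 0 ≤ C)
    (hblock : ∀ k : ℕ, k * L + L ≤ t → ‖∫ u in k * L..k * L + L, g u‖ ≤ C)
    (hbound : ∀ u ∈ Icc 0 t, ‖g u‖ ≤ D) :
    ‖∫ u in 0..t, g u‖ ≤ c * C + D * L := by
  set K := ⌊t / L⌋₊
  have hKt : K * L ≤ t := (le_div_iff₀ hL).1 (Nat.floor_le (div_nonneg ht hL.le))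
  have htK : t ≤ K * L + L := by
    have := (div_lt_iff₀ hL).1 (Nat.lt_floor_add_one (t / L))
    linarith
  have hKc : (K : ℝ) ≤ c := le_of_mul_le_mul_right (hKt.trans htc) hL
  have hsplit : ∫ u in 0..t, g u
      = (∑ k ∈ Finset.range K, ∫ u in k * L..k * L + L, g u) + ∫ u in K * L..t, g u := by
    have := sum_integral_adjacent_intervals (a := fun k : ℕ => k * L) (n := K) (μ := volume)
      fun k _ => hg.intervalIntegrable (k * L) ((k + 1 : ℕ) * L)
    simp only [Nat.cast_add_one, add_one_mul, Nat.cast_zero, zero_mul] at this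
    rw [this, integral_add_adjacent_intervals (hg.intervalIntegrable _ _)
      (hg.intervalIntegrable _ _)]
  have hblocks : ‖∑ k ∈ Finset.range K, ∫ u in k * L..k * L + L, g u‖ ≤ K * C :=
    calc _ ≤ ∑ k ∈ Finset.range K, ‖∫ u in k * L..k * L + L, g u‖ := norm_sum_le _ _
      _ ≤ ∑ _k ∈ Finset.range K, C := Finset.sum_le_sum fun k hk => hblock k <| by
        have : (k : ℝ) + 1 ≤ K := by exact_mod_cast Finset.mem_range.1 hk
        nlinarith
      _ = K * C := by simp
  have hrest : ‖∫ u in K * L..t, g u‖ ≤ D * L := by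
    refine (norm_integral_le_of_norm_le_const fun u hu => hbound u ?_).trans ?_
    · rw [uIoc_of_le hKt] at hu
      exact ⟨(by positivity : (0 : ℝ) ≤ K * L).trans hu.1.le, hu.2⟩
    · have hD : 0 ≤ D := (norm_nonneg _).trans (hbound 0 ⟨le_rfl, ht⟩)
      rw [abs_of_nonneg (sub_nonneg.2 hKt)]
      exact mul_le_mul_of_nonneg_left (by linarith) hD
  calc ‖∫ u in 0..t, g u‖ ≤ K * C + D * L := hsplit ▸ norm_add_le_of_le hblocks hrest
    _ ≤ c * C + D * L := by gcongr

theorem integral_comp_mul_add_div_of_periodic {g : ℝ → E} {T c : ℝ} (hg : Periodic g T)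
    (hc : c ≠ 0) (a : ℝ) :
    ∫ u in a..a + T / c, g (c * u) = c⁻¹ • ∫ s in 0..T, g s := by
  rw [integral_comp_mul_left _ hc, mul_add, mul_div_cancel₀ _ hc,
    hg.intervalIntegral_add_eq (c * a) 0, zero_add]

theorem norm_inv_smul_integral_le {g : ℝ → E} {T M : ℝ} (hT : 0 < T)
    (h : ∀ s ∈ Ι 0 T, ‖g s‖ ≤ M) : ‖T⁻¹ • ∫ s in 0..T, g s‖ ≤ M := by
  have := norm_integral_le_of_norm_le_const h
  rw [norm_smul, norm_inv, Real.norm_of_nonneg hT.le, sub_zero, abs_of_pos hT] at *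
  rwa [inv_mul_le_iff₀ hT, mul_comm]

noncomputable def loopAverage (Γ : ℝ → ℝ → E) (T u : ℝ) : E :=
  T⁻¹ • ∫ s in 0..T, Γ u s

variable {Γ : ℝ → ℝ → E} {T M M₁ M₂ : ℝ}

theorem continuous_loopAverage (hΓ : Continuous (uncurry Γ)) : Continuous (loopAverage Γ T) :=
  (continuous_parametric_intervalIntegral_of_continuous' hΓ 0 T).const_smul _

theorem norm_loopAverage_le (hT : 0 < T) {u : ℝ} (h : ∀ v, ‖Γ u v‖ ≤ M) :
    ‖loopAverage Γ T u‖ ≤ M :=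
  norm_inv_smul_integral_le hT fun s _ => h s

theorem norm_loopAverage_sub_le (hT : 0 < T) (hΓ : Continuous (uncurry Γ)) {u a : ℝ}
    (h : ∀ v, ‖Γ u v - Γ a v‖ ≤ M) :
    ‖loopAverage Γ T u - loopAverage Γ T a‖ ≤ M := by
  rw [loopAverage, loopAverage, ← smul_sub, ← integral_sub
    ((hΓ.uncurry_left u).intervalIntegrable 0 T) ((hΓ.uncurry_left a).intervalIntegrable 0 T)]
  exact norm_inv_smul_integral_le hT fun s _ => h s

theorem norm_integral_sub_loopAverage_le_of_period [CompleteSpace E] (hT : 0 < T)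
    (hΓ : Continuous (uncurry Γ)) (hper : ∀ u, Periodic (Γ u) T)
    (hLip : ∀ v, ∀ a ∈ Icc 0 T, ∀ u ∈ Icc 0 T, ‖Γ u v - Γ a v‖ ≤ M * |u - a|)
    {c a : ℝ} (hc : 0 < c) (ha : 0 ≤ a) (haT : a + T / c ≤ T) :
    ‖∫ u in a..a + T / c, (Γ u (c * u) - loopAverage Γ T u)‖ ≤ M * (T / c) ^ 2 := by
  set b := a + T / c
  have hab : a ≤ b := le_add_of_nonneg_right (div_pos hT hc).le
  have hsub : Icc a b ⊆ Icc 0 T := Icc_subset_Icc ha haT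
  have hfast : Continuous fun u => Γ u (c * u) :=
    hΓ.comp (continuous_id.prodMk (continuous_const.mul continuous_id))
  have hfrozen : Continuous fun u => Γ a (c * u) :=
    (hΓ.uncurry_left a).comp (continuous_const.mul continuous_id)
  have havg : Continuous (loopAverage Γ T) := continuous_loopAverage hΓ
  have hdist : ∀ u ∈ Icc a b, ∀ v, ‖Γ u v - Γ a v‖ ≤ M * (u - a) := fun u hu v => by
    simpa only [abs_of_nonneg (sub_nonneg.2 hu.1)] using
      hLip v a (hsub ⟨le_rfl, hab⟩) u (hsub hu)
  have hfrozen_int : ∫ u in a..b, Γ a (c * u) = ∫ _ in a..b, loopAverage Γ T a := by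
    rw [integral_comp_mul_add_div_of_periodic (hper a) hc.ne', intervalIntegral.integral_const,
      loopAverage, smul_smul, add_sub_cancel_left]
    congr 1
    field_simp
  have hsplit : ∫ u in a..b, (Γ u (c * u) - loopAverage Γ T u)
      = (∫ u in a..b, (Γ u (c * u) - Γ a (c * u)))
        + ∫ u in a..b, (loopAverage Γ T a - loopAverage Γ T u) := by
    rw [integral_sub (hfast.intervalIntegrable a b) (havg.intervalIntegrable a b),
      integral_sub (hfast.intervalIntegrable a b) (hfrozen.intervalIntegrable a b),
      integral_sub intervalIntegrable_const (havg.intervalIntegrable a b), hfrozen_int]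
    abel
  have hfrozen_bound := norm_integral_le_of_norm_le_mul_sub
    (f := fun u => Γ u (c * u) - Γ a (c * u))
    hab ((hfast.sub hfrozen).intervalIntegrable a b) fun u hu => hdist u hu (c * u)
  have havg_bound := norm_integral_le_of_norm_le_mul_sub
    (f := fun u => loopAverage Γ T a - loopAverage Γ T u)
    hab ((continuous_const.sub havg).intervalIntegrable a b) fun u hu => by
      rw [norm_sub_rev]; exact norm_loopAverage_sub_le hT hΓ (hdist u hu)
  calc _ ≤ _ := hsplit ▸ norm_add_le_of_le hfrozen_bound havg_bound
    _ = M * (T / c) ^ 2 := by rw [add_sub_cancel_left]; ring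

theorem norm_integral_sub_loopAverage_le [CompleteSpace E] (hT : 0 < T)
    (hΓ : Continuous (uncurry Γ)) (hper : ∀ u, Periodic (Γ u) T) (hM₁ : 0 ≤ M₁)
    (hLip : ∀ v, ∀ a ∈ Icc 0 T, ∀ u ∈ Icc 0 T, ‖Γ u v - Γ a v‖ ≤ M₁ * |u - a|)
    (hbound : ∀ u ∈ Icc 0 T, ∀ v, ‖Γ u v‖ ≤ M₂) {c t : ℝ} (hc : 0 < c) (ht : t ∈ Icc 0 T) :
    ‖∫ u in 0..t, (Γ u (c * u) - loopAverage Γ T u)‖ ≤ (M₁ * T + 2 * M₂) * T / c := by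
  have hg : Continuous fun u => Γ u (c * u) - loopAverage Γ T u :=
    (hΓ.comp (continuous_id.prodMk (continuous_const.mul continuous_id))).sub
      (continuous_loopAverage hΓ)
  have hdefect_bound : ∀ u ∈ Icc 0 t, ‖Γ u (c * u) - loopAverage Γ T u‖ ≤ 2 * M₂ := fun u hu => by
    have hu' : u ∈ Icc 0 T := ⟨hu.1, hu.2.trans ht.2⟩
    linarith [norm_sub_le (Γ u (c * u)) (loopAverage Γ T u), hbound u hu' (c * u),
      norm_loopAverage_le hT (hbound u hu')]
  refine (norm_integral_le_of_blocks hg (div_pos hT hc) ht.1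
    (by rw [mul_div_cancel₀ _ hc.ne']; exact ht.2) (by positivity : 0 ≤ M₁ * (T / c) ^ 2)
    (fun k hk => norm_integral_sub_loopAverage_le_of_period hT hΓ hper hLip hc (by positivity)
      (hk.trans ht.2)) hdefect_bound).trans_eq ?_
  field_simp

end Averaging

section ComplexPlane

open Complex

theorem ContDiff.differentiable_uncurry_right {γ : ℝ → ℝ → ℝ} {k : WithTop ℕ∞}
    (h : ContDiff ℝ k (uncurry γ)) (hk : k ≠ 0) (v : ℝ) : Differentiable ℝ (γ · v) :=
  (h.differentiable hk).comp (differentiable_id.prodMk (differentiable_const v))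

theorem norm_ofReal_add_mul_I_sub_le {f g : ℝ → ℝ} {s : Set ℝ} {M : ℝ} (hs : Convex ℝ s)
    (hf : Differentiable ℝ f) (hg : Differentiable ℝ g)
    (hM : ∀ w ∈ s, √(deriv f w ^ 2 + deriv g w ^ 2) ≤ M) {a u : ℝ} (ha : a ∈ s) (hu : u ∈ s) :
    ‖(f u + g u * I : ℂ) - (f a + g a * I)‖ ≤ M * |u - a| := by
  simpa only [Real.norm_eq_abs] using hs.norm_image_sub_le_of_norm_hasDerivWithin_le
    (f := fun w => (f w + g w * I : ℂ)) (f' := fun w => deriv f w + deriv g w * I)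
    (fun w _ => ((hf w).hasDerivAt.ofReal_comp.add
      ((hg w).hasDerivAt.ofReal_comp.mul_const I)).hasDerivWithinAt)
    (fun w hw => (norm_add_mul_I _ _).trans_le (hM w hw)) ha hu

theorem integral_ofReal_add_mul_I {f g : ℝ → ℝ} (hf : Continuous f) (hg : Continuous g)
    (a b : ℝ) :
    ∫ u in a..b, (f u + g u * I : ℂ) = (∫ u in a..b, f u : ℝ) + (∫ u in a..b, g u : ℝ) * I := by
  rw [intervalIntegral.integral_add
      ((by fun_prop : Continuous fun u => (f u : ℂ)).intervalIntegrable _ _)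
      ((by fun_prop : Continuous fun u => (g u * I : ℂ)).intervalIntegrable _ _),
    intervalIntegral.integral_mul_const, integral_ofReal, integral_ofReal]

theorem loopAverage_ofReal_add_mul_I {γ₁ γ₂ : ℝ → ℝ → ℝ} {u : ℝ} (h₁ : Continuous (γ₁ u))
    (h₂ : Continuous (γ₂ u)) (T : ℝ) :
    loopAverage (fun u v => (γ₁ u v + γ₂ u v * I : ℂ)) T u
      = (T⁻¹ * ∫ s in 0..T, γ₁ u s : ℝ) + (T⁻¹ * ∫ s in 0..T, γ₂ u s : ℝ) * I := by
  rw [loopAverage, integral_ofReal_add_mul_I h₁ h₂, Complex.real_smul]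
  push_cast
  ring

theorem integral_sub_deriv_ofReal_add_mul_I {f g x z : ℝ → ℝ} (hf : Continuous f)
    (hg : Continuous g) (hx : ContDiff ℝ 1 x) (hz : ContDiff ℝ 1 z) (t : ℝ) :
    ∫ u in 0..t, ((f u + g u * I : ℂ) - (deriv x u + deriv z u * I))
      = (x 0 + (∫ u in 0..t, f u) - x t : ℝ) + (z 0 + (∫ u in 0..t, g u) - z t : ℝ) * I := by
  have hx' := hx.continuous_deriv le_rfl
  have hz' := hz.continuous_deriv le_rfl
  rw [integral_sub ((by fun_prop : Continuous fun u => (f u + g u * I : ℂ)).intervalIntegrable _ _)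
      ((by fun_prop : Continuous fun u => (deriv x u + deriv z u * I : ℂ)).intervalIntegrable _ _),
    integral_ofReal_add_mul_I hf hg, integral_ofReal_add_mul_I hx' hz',
    integral_deriv_eq_sub (fun u _ => hx.differentiable one_ne_zero u) (hx'.intervalIntegrable _ _),
    integral_deriv_eq_sub (fun u _ => hz.differentiable one_ne_zero u) (hz'.intervalIntegrable _ _)]
  push_cast
  ring

end ComplexPlane

theorem primitive_uniformly_close_general
    (x z : ℝ → ℝ)
    (hx : ContDiff ℝ (⊤ : ℕ∞) x)
    (hz : ContDiff ℝ (⊤ : ℕ∞) z)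
    (γ₁ γ₂ : ℝ → ℝ → ℝ)
    (h1 : ContDiff ℝ 1 (Function.uncurry γ₁))
    (h2 : ContDiff ℝ 1 (Function.uncurry γ₂))
    (hper1 : ∀ u v : ℝ, γ₁ u (v + 2 * π) = γ₁ u v)
    (hper2 : ∀ u v : ℝ, γ₂ u (v + 2 * π) = γ₂ u v)
    (havg : ∀ t ∈ Icc (0 : ℝ) (2 * π),
      (1 / (2 * π)) * ∫ s in (0 : ℝ)..(2 * π), γ₁ t s = deriv x t ∧
      (1 / (2 * π)) * ∫ s in (0 : ℝ)..(2 * π), γ₂ t s = deriv z t)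
    (n : ℕ) (hn : 1 ≤ n)
    (M₁ M₂ : ℝ)
    (hM₁ : ∀ u ∈ Icc (0 : ℝ) (2 * π), ∀ v : ℝ,
      Real.sqrt ((deriv (fun w => γ₁ w v) u) ^ 2 + (deriv (fun w => γ₂ w v) u) ^ 2) ≤ M₁)
    (hM₂ : ∀ u ∈ Icc (0 : ℝ) (2 * π), ∀ v : ℝ,
      Real.sqrt ((γ₁ u v) ^ 2 + (γ₂ u v) ^ 2) ≤ M₂) :
    ∀ t ∈ Icc (0 : ℝ) (2 * π),
      Real.sqrt
          ((x 0 + (∫ u in (0 : ℝ)..t, γ₁ u (n * u)) - x t) ^ 2 +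
            (z 0 + (∫ u in (0 : ℝ)..t, γ₂ u (n * u)) - z t) ^ 2)
        ≤ 4 * π / n * (π * M₁ + M₂) := by
  intro t ht
  have hT : (0 : ℝ) < 2 * π := by positivity
  have hγ₁ := h1.continuous
  have hγ₂ := h2.continuous
  set Γ : ℝ → ℝ → ℂ := fun u v => γ₁ u v + γ₂ u v * Complex.I
  have hΓ : Continuous (uncurry Γ) := by fun_prop
  have hper : ∀ u, Periodic (Γ u) (2 * π) := fun u v => by simp only [Γ, hper1, hper2]
  have hLip : ∀ v, ∀ a ∈ Icc 0 (2 * π), ∀ u ∈ Icc 0 (2 * π), ‖Γ u v - Γ a v‖ ≤ M₁ * |u - a| :=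
    fun v a ha u hu => norm_ofReal_add_mul_I_sub_le (convex_Icc 0 (2 * π))
      (h1.differentiable_uncurry_right one_ne_zero v)
      (h2.differentiable_uncurry_right one_ne_zero v)
      (fun w hw => hM₁ w hw v) ha hu
  have hbound : ∀ u ∈ Icc 0 (2 * π), ∀ v, ‖Γ u v‖ ≤ M₂ :=
    fun u hu v => (Complex.norm_add_mul_I _ _).trans_le (hM₂ u hu v)
  have key := norm_integral_sub_loopAverage_le hT hΓ hper
    ((sqrt_nonneg _).trans (hM₁ 0 ⟨le_rfl, hT.le⟩ 0)) hLip hbound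
    (by exact_mod_cast hn : (0 : ℝ) < n) ht
  have havgΓ : ∀ u ∈ Icc 0 (2 * π),
      loopAverage Γ (2 * π) u = deriv x u + deriv z u * Complex.I := fun u hu => by
    rw [loopAverage_ofReal_add_mul_I (hγ₁.uncurry_left u) (hγ₂.uncurry_left u), ← one_div,
      (havg u hu).1, (havg u hu).2]
  have hdefect : ∫ u in 0..t, (Γ u (n * u) - loopAverage Γ (2 * π) u)
      = (x 0 + (∫ u in 0..t, γ₁ u (n * u)) - x t : ℝ)
        + (z 0 + (∫ u in 0..t, γ₂ u (n * u)) - z t : ℝ) * Complex.I :=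
    (integral_congr fun u hu => congrArg (Γ u (n * u) - ·)
        (havgΓ u (uIcc_subset_Icc ⟨le_rfl, hT.le⟩ ht hu))).trans
      (integral_sub_deriv_ofReal_add_mul_I (f := fun u => γ₁ u (n * u))
        (g := fun u => γ₂ u (n * u)) (by fun_prop) (by fun_prop)
        (hx.of_le (by simp)) (hz.of_le (by simp)) t)
  rw [hdefect, Complex.norm_add_mul_I] at key
  exact key.trans_eq (by field_simp; ring)

/-- If the `C¹` family of loops `γ = (γ₁, γ₂)`, `2π`-periodic in the second variable, has
barycenter `(x'(t), z'(t))`, then the convex-integration primitive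
`(a(t), c(t)) = (x(0), z(0)) + ∫₀ᵗ γ(u, nu) du` is uniformly `(4π/n)·(π·sup‖∂ₜγ‖ + sup‖γ‖)`-close
to `(x(t), z(t))` in the Euclidean norm. -/
theorem primitive_uniformly_close
    (x y z : ℝ → ℝ)
    (hx : ContDiff ℝ (⊤ : ℕ∞) x) (hy : ContDiff ℝ (⊤ : ℕ∞) y)
    (hz : ContDiff ℝ (⊤ : ℕ∞) z)
    (γ₁ γ₂ : ℝ → ℝ → ℝ)
    (h1 : ContDiff ℝ 1 (Function.uncurry γ₁))
    (h2 : ContDiff ℝ 1 (Function.uncurry γ₂))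
    (hper1 : ∀ u v : ℝ, γ₁ u (v + 2 * π) = γ₁ u v)
    (hper2 : ∀ u v : ℝ, γ₂ u (v + 2 * π) = γ₂ u v)
    (havg : ∀ t ∈ Icc (0 : ℝ) (2 * π),
      (1 / (2 * π)) * ∫ s in (0 : ℝ)..(2 * π), γ₁ t s = deriv x t ∧
      (1 / (2 * π)) * ∫ s in (0 : ℝ)..(2 * π), γ₂ t s = deriv z t)
    (n : ℕ) (hn : 1 ≤ n)
    (M₁ M₂ : ℝ)
    (hM₁ : ∀ u ∈ Icc (0 : ℝ) (2 * π), ∀ v : ℝ,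
      Real.sqrt ((deriv (fun w => γ₁ w v) u) ^ 2 + (deriv (fun w => γ₂ w v) u) ^ 2) ≤ M₁)
    (hM₂ : ∀ u ∈ Icc (0 : ℝ) (2 * π), ∀ v : ℝ,
      Real.sqrt ((γ₁ u v) ^ 2 + (γ₂ u v) ^ 2) ≤ M₂) :
    ∀ t ∈ Icc (0 : ℝ) (2 * π),
      Real.sqrt
          ((x 0 + (∫ u in (0 : ℝ)..t, γ₁ u (n * u)) - x t) ^ 2 +
            (z 0 + (∫ u in (0 : ℝ)..t, γ₂ u (n * u)) - z t) ^ 2)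
        ≤ 4 * π / n * (π * M₁ + M₂) :=
  primitive_uniformly_close_general x z hx hz γ₁ γ₂ h1 h2 hper1 hper2 havg n hn M₁ M₂ hM₁ hM₂
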